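/- Let X be a finite set of atoms and t an integer with 2 ≤ t ≤ |X|, and let E^p_{t,X} be the normal program consisting of all rules a_t ← not a_1, …, not a_{t−1}, where a_1, …, a_t are pairwise distinct atoms of X. Then the stable models of E^p_{t,X} are exactly the subsets of X of cardinality |X| − t + 1. -/

import Mathlib

/-!
A rule of `E^p_{t,X}` with head `a` fires under `M` exactly when `X \ {a}` has `t - 1` atoms
outside `M`, so `M` is stable iff it is the set of such `a`. With `k = |X \ M|`, an atom of `M`
then needs `t - 1 ≤ k` and an atom of `X \ M` needs `k - 1 < t - 1`. Since `t ≤ |X|` forces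
`M ≠ ∅` and `2 ≤ t` forces `M ≠ X`, both kinds of atoms occur, whence `k = t - 1`.
-/

open Classical

/-- A normal program rule `head ← pos, not neg`. -/
structure PRule where
  head : ℕ
  pos : Finset ℕ
  neg : Finset ℕ
deriving DecidableEq

/-- `At(P)`: the set of atoms occurring in a normal program. -/
def pAtoms (P : Finset PRule) : Finset ℕ :=
  P.sup (fun r => insert r.head (r.pos ∪ r.neg))

/-- `N` is closed under the rules of the reduct `P^M`: whenever a rule of `P` has no negated
atom in `M` and its positive body is contained in `N`, its head belongs to `N`. -/
def closedUnder (P : Finset PRule) (M : Finset ℕ) (N : Set ℕ) : Prop :=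
  ∀ r ∈ P, (∀ b ∈ r.neg, b ∉ M) → (↑r.pos : Set ℕ) ⊆ N → r.head ∈ N

/-- `M` is a stable model of `P`: `M` equals the least set of atoms closed under the rules of
the reduct `P^M`. -/
def isStable (P : Finset PRule) (M : Finset ℕ) : Prop :=
  closedUnder P M ↑M ∧ ∀ N : Set ℕ, closedUnder P M N → ↑M ⊆ N

/-- `E^p_{t,X}`: the normal program of all rules `a_t ← not a_1, …, not a_{t−1}` with
`a_1, …, a_t` pairwise distinct atoms of `X`. -/
def EpProg (t : ℕ) (X : Finset ℕ) : Finset PRule :=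
  X.biUnion (fun a => ((X.erase a).powersetCard (t - 1)).image (fun s => ⟨a, ∅, s⟩))

open Finset

namespace Finset

variable {α : Type*} [DecidableEq α] {s t : Finset α} {a : α}

theorem eq_filter_iff {p : α → Prop} [DecidablePred p] :
    s = t.filter p ↔ s ⊆ t ∧ (∀ a ∈ s, p a) ∧ ∀ a ∈ t \ s, ¬ p a := by
  simp only [Finset.ext_iff, mem_filter, mem_sdiff, subset_iff]
  grind

theorem card_erase_sdiff_of_mem (ha : a ∈ s) : #(t.erase a \ s) = #(t \ s) := by
  rw [erase_sdiff_comm, erase_eq_of_notMem fun h => (mem_sdiff.1 h).2 ha]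

theorem card_erase_sdiff_of_mem_sdiff (ha : a ∈ t \ s) : #(t.erase a \ s) = #(t \ s) - 1 := by
  rw [erase_sdiff_comm, card_erase_of_mem ha]

end Finset

section EpProg

variable {t : ℕ} {X M : Finset ℕ}

theorem mem_EpProg {r : PRule} :
    r ∈ EpProg t X ↔
      r.head ∈ X ∧ r.pos = ∅ ∧ r.neg ⊆ X.erase r.head ∧ #r.neg = t - 1 := by
  simp only [EpProg, mem_biUnion, mem_image, mem_powersetCard]
  constructor
  · rintro ⟨a, ha, s, ⟨hs, hcard⟩, rfl⟩
    exact ⟨ha, rfl, hs, hcard⟩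
  · rintro ⟨hhead, hpos, hneg, hcard⟩
    exact ⟨r.head, hhead, r.neg, ⟨hneg, hcard⟩, by cases r; simp_all⟩

theorem closedUnder_EpProg_iff {N : Set ℕ} :
    closedUnder (EpProg t X) M N ↔ ∀ a ∈ X, t - 1 ≤ #(X.erase a \ M) → a ∈ N := by
  constructor
  · intro h a ha hcard
    obtain ⟨s, hs, hscard⟩ := exists_subset_card_eq hcard
    refine h ⟨a, ∅, s⟩ ?_ (fun b hb => (mem_sdiff.1 (hs hb)).2) (by simp)
    exact mem_EpProg.2 ⟨ha, rfl, fun b hb => (mem_sdiff.1 (hs hb)).1, hscard⟩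
  · intro h r hr hneg _
    obtain ⟨hhead, -, hsub, hcard⟩ := mem_EpProg.1 hr
    refine h r.head hhead (hcard ▸ card_le_card fun b hb => ?_)
    exact mem_sdiff.2 ⟨hsub hb, hneg b hb⟩

theorem isStable_EpProg_iff :
    isStable (EpProg t X) M ↔ M = X.filter fun a => t - 1 ≤ #(X.erase a \ M) := by
  set F := X.filter fun a => t - 1 ≤ #(X.erase a \ M)
  have hF (N : Set ℕ) : closedUnder (EpProg t X) M N ↔ ↑F ⊆ N := by
    simp only [closedUnder_EpProg_iff, F, Set.subset_def, mem_coe, mem_filter, and_imp]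
  constructor
  · rintro ⟨hclosed, hleast⟩
    exact Subset.antisymm (coe_subset.1 (hleast _ ((hF _).2 subset_rfl)))
      (coe_subset.1 ((hF _).1 hclosed))
  · intro hM
    refine ⟨(hF _).2 (hM ▸ subset_rfl), fun N hN => ?_⟩
    exact hM ▸ (hF N).1 hN

theorem isStable_EpProg_iff_card :
    isStable (EpProg t X) M ↔
      M ⊆ X ∧ (M.Nonempty → t - 1 ≤ #(X \ M)) ∧ ((X \ M).Nonempty → #(X \ M) < t) := by
  rw [isStable_EpProg_iff, eq_filter_iff]
  simp only [Finset.Nonempty, forall_exists_index]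
  refine and_congr_right fun _ => and_congr ?_ ?_
  · exact forall₂_congr fun a ha => by rw [card_erase_sdiff_of_mem ha]
  · refine forall₂_congr fun a ha => ?_
    have : 0 < #(X \ M) := card_pos.2 ⟨a, ha⟩
    rw [card_erase_sdiff_of_mem_sdiff ha]
    omega

end EpProg

/-- For `2 ≤ t ≤ |X|`, the stable models of `E^p_{t,X}` are exactly the subsets of `X` of
cardinality `|X| − t + 1`. -/
theorem EpProg_stable_models (X : Finset ℕ) (t : ℕ) (ht : 2 ≤ t) (htX : t ≤ X.card) :
    ∀ M : Finset ℕ, isStable (EpProg t X) M ↔ (M ⊆ X ∧ M.card = X.card - t + 1) := by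
  intro M
  refine isStable_EpProg_iff_card.trans (and_congr_right fun hMX => ?_)
  have := card_le_card hMX
  rw [← card_pos, ← card_pos, card_sdiff_of_subset hMX]
  omega
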